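/- For all real numbers d_0, d_1 and every integer k ≥ 1: c^{(k)}(d_0, d_1) = ∫_{−1}^{1} Q(x)^k dμ_e(x). -/

import Mathlib

/-!
Substituting `x = cos θ` turns the arcsine moment into `(1 / 2π) ∫_{-π}^{π} Q(cos θ)^k dθ`.
Writing `cos θ = (e^{iθ} + e^{-iθ}) / 2` gives `Q(cos θ) = ∑_{|γ| ≤ 2} U_{|γ|} e^{iγθ}`, and
expanding the `k`-th power, the orthogonality of the characters `e^{inθ}` keeps exactly the
terms with `γ_1 + ⋯ + γ_k = 0`.
-/

open Finset Real MeasureTheory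

/-- The weights `U_0 = d1/4`, `U_1 = d0/2`, `U_2 = d1/8`. -/
noncomputable def Uwt (d0 d1 : ℝ) : ℕ → ℝ :=
  fun a => if a = 0 then d1 / 4 else if a = 1 then d0 / 2 else d1 / 8

/-- The weighted closed-path sum `c^{(k)}(d0,d1)`: the sum over all sequences
`γ : Fin k → {-2,-1,0,1,2}` with `∑ γ t = 0` of `∏ t, U_{|γ t|}`. -/
noncomputable def cpath (d0 d1 : ℝ) (k : ℕ) : ℝ :=
  ∑ γ ∈ (Finset.univ : Finset (Fin k → ({-2, -1, 0, 1, 2} : Finset ℤ))).filter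
      (fun γ => ∑ t, (γ t : ℤ) = 0),
    ∏ t, Uwt d0 d1 (γ t : ℤ).natAbs

theorem integral_exp_int_mul_I (n : ℤ) :
    ∫ θ in -π..π, Complex.exp (n * Complex.I * θ) = (if n = 0 then 2 * π else 0 : ℂ) := by
  split_ifs with hn
  · simp [hn, two_mul]
  have hc : (n : ℂ) * Complex.I ≠ 0 := by simp [hn]
  rw [integral_exp_mul_complex hc, div_eq_zero_iff, sub_eq_zero, Complex.exp_eq_exp_iff_exists_int]
  exact .inl ⟨n, by push_cast; ring⟩

theorem integral_trigPoly_pow (S : Finset ℤ) (a : ℤ → ℂ) (k : ℕ) :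
    ∫ θ in -π..π, (∑ n ∈ S, a n * Complex.exp (n * Complex.I * θ)) ^ k
      = 2 * π * ∑ γ ∈ (univ : Finset (Fin k → S)).filter (fun γ => ∑ t, (γ t : ℤ) = 0),
          ∏ t, a (γ t) := by
  have expand : ∀ θ : ℝ, (∑ n ∈ S, a n * Complex.exp (n * Complex.I * θ)) ^ k
      = ∑ γ : Fin k → S, (∏ t, a (γ t)) * Complex.exp ((∑ t, (γ t : ℤ) : ℤ) * Complex.I * θ) := by
    intro θ
    rw [← Finset.sum_coe_sort S, Fintype.sum_pow]
    refine Finset.sum_congr rfl fun γ _ => ?_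
    rw [Finset.prod_mul_distrib, ← Complex.exp_sum]
    push_cast
    simp only [Finset.sum_mul]
  simp_rw [expand]
  rw [intervalIntegral.integral_finsetSum
      fun γ _ => (by fun_prop : Continuous _).intervalIntegrable _ _,
    Finset.sum_filter, Finset.mul_sum]
  refine Finset.sum_congr rfl fun γ _ => ?_
  rw [intervalIntegral.integral_const_mul, integral_exp_int_mul_I]
  split_ifs <;> ring

theorem Function.Even.integral_neg_eq_two_nsmul {E : Type*} [NormedAddCommGroup E]
    [NormedSpace ℝ E] {f : ℝ → E} (hf : Function.Even f) {a : ℝ}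
    (hint : IntervalIntegrable f volume (-a) a) :
    ∫ x in -a..a, f x = 2 • ∫ x in 0..a, f x := by
  have h0 : (0 : ℝ) ∈ Set.uIcc (-a) a := by
    rcases le_total 0 a with h | h <;> simp [h]
  rw [← intervalIntegral.integral_add_adjacent_intervals
      (hint.mono_set (Set.uIcc_subset_uIcc_left h0))
      (hint.mono_set (Set.uIcc_subset_uIcc_right h0)), two_nsmul]
  congr 1
  simpa [hf _] using (intervalIntegral.integral_comp_neg (a := 0) (b := a) f).symm

theorem integral_div_sqrt_one_sub_sq (g : ℝ → ℝ) :
    ∫ x in (-1 : ℝ)..1, g x / √(1 - x ^ 2) = ∫ θ in 0..π, g (cos θ) := by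
  rw [intervalIntegral.integral_of_le (by norm_num), intervalIntegral.integral_of_le pi_pos.le,
    integral_Ioc_eq_integral_Ioo, integral_Ioc_eq_integral_Ioo,
    show Set.Ioo (-1 : ℝ) 1 = cos '' Set.Ioo 0 π from
      cosPartialHomeomorph.image_source_eq_target.symm,
    integral_image_eq_integral_abs_deriv_smul measurableSet_Ioo
      (fun x _ => (hasDerivAt_cos x).hasDerivWithinAt) (injOn_cos.mono Set.Ioo_subset_Icc_self)]
  refine setIntegral_congr_fun measurableSet_Ioo fun θ hθ => ?_
  have hsin : 0 < sin θ := sin_pos_of_pos_of_lt_pi hθ.1 hθ.2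
  have hsqrt : √(1 - cos θ ^ 2) = sin θ := by
    rw [← sin_sq, sqrt_sq hsin.le]
  simp only [smul_eq_mul, hsqrt, abs_neg, abs_of_pos hsin]
  field_simp

theorem ofReal_quadratic_cos_eq_sum (d0 d1 θ : ℝ) :
    ((d1 / 2 * cos θ ^ 2 + d0 * cos θ : ℝ) : ℂ)
      = ∑ n ∈ ({-2, -1, 0, 1, 2} : Finset ℤ),
          (Uwt d0 d1 n.natAbs : ℂ) * Complex.exp (n * Complex.I * θ) := by
  have hcos : Complex.cos θ
      = (Complex.exp (Complex.I * θ) + (Complex.exp (Complex.I * θ))⁻¹) / 2 := by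
    rw [Complex.cos, ← Complex.exp_neg]
    ring_nf
  set E := Complex.exp (Complex.I * θ)
  have hpow : ∀ n : ℤ, Complex.exp (n * Complex.I * θ) = E ^ n := fun n => by
    rw [mul_assoc, Complex.exp_int_mul]
  have hE : E ≠ 0 := Complex.exp_ne_zero _
  push_cast
  rw [hcos]
  norm_num [hpow, Uwt]
  field_simp
  ring

theorem integral_quadratic_cos_pow (d0 d1 : ℝ) (k : ℕ) :
    ∫ θ in -π..π, (d1 / 2 * cos θ ^ 2 + d0 * cos θ) ^ k = 2 * π * cpath d0 d1 k := by
  apply Complex.ofReal_injective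
  rw [← intervalIntegral.integral_ofReal]
  simp only [Complex.ofReal_pow, ofReal_quadratic_cos_eq_sum, integral_trigPoly_pow, cpath]
  push_cast
  rfl

theorem cpath_eq_arcsine_moment_general (d0 d1 : ℝ) (k : ℕ) :
    cpath d0 d1 k
      = ∫ x in (-1 : ℝ)..1, (d1 / 2 * x ^ 2 + d0 * x) ^ k / (π * Real.sqrt (1 - x ^ 2)) := by
  have hcont : Continuous fun θ => (d1 / 2 * cos θ ^ 2 + d0 * cos θ) ^ k := by fun_prop
  have heven : Function.Even fun θ => (d1 / 2 * cos θ ^ 2 + d0 * cos θ) ^ k := fun θ => by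
    simp only [cos_neg]
  have hsymm := heven.integral_neg_eq_two_nsmul (hcont.intervalIntegrable (-π) π)
  rw [integral_quadratic_cos_pow, nsmul_eq_mul, Nat.cast_ofNat] at hsymm
  simp_rw [div_mul_eq_div_div]
  rw [integral_div_sqrt_one_sub_sq fun x => (d1 / 2 * x ^ 2 + d0 * x) ^ k / π,
    intervalIntegral.integral_div, eq_div_iff pi_ne_zero]
  linarith

theorem cpath_eq_arcsine_moment (d0 d1 : ℝ) (k : ℕ) (hk : 1 ≤ k) :
    cpath d0 d1 k
      = ∫ x in (-1 : ℝ)..1, (d1 / 2 * x ^ 2 + d0 * x) ^ k / (π * Real.sqrt (1 - x ^ 2)) :=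
  cpath_eq_arcsine_moment_general d0 d1 k
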